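/- Let n ≥ 1 and let A, B ∈ M_n(ℤ) be non-singular with det A ≠ ±1, and suppose P'(A) = ∅, i.e., for every prime p dividing det A the characteristic polynomial h_A reduces to x^n modulo p. Then there exists an additive group isomorphism between G_A and G_B if and only if det A and det B are divisible by exactly the same primes and P'(B) = ∅ (i.e., for every prime p dividing det B the characteristic polynomial h_B reduces to x^n modulo p). -/

import Mathlib

open Matrix Polynomial

/-- The image of an integer matrix in `M_n(ℚ)`. -/
noncomputable def Qmat {n : ℕ} (A : Matrix (Fin n) (Fin n) ℤ) : Matrix (Fin n) (Fin n) ℚ :=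
  A.map (Int.cast : ℤ → ℚ)

/-- `G_A = {A^k x : x ∈ ℤ^n, k ∈ ℤ} ⊆ ℚ^n`, negative powers taken in `M_n(ℚ)`. -/
noncomputable def GA {n : ℕ} (A : Matrix (Fin n) (Fin n) ℤ) : Set (Fin n → ℚ) :=
  {w | ∃ (x : Fin n → ℤ) (k : ℤ), w = (Qmat A ^ k) *ᵥ (fun i => (x i : ℚ))}

/-- `G_A` as an additive subgroup of `ℚ^n` (it is closed under the group operations,
so the closure has carrier exactly `G_A`). -/
noncomputable def GAgrp {n : ℕ} (A : Matrix (Fin n) (Fin n) ℤ) : AddSubgroup (Fin n → ℚ) :=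
  AddSubgroup.closure (GA A)

/-- The subring `ℤ[1/d] = {a / d^m : a ∈ ℤ, m ∈ ℕ}` of `ℚ`. -/
def Zinv (d : ℤ) : Set ℚ :=
  {q | ∃ (a : ℤ) (m : ℕ), q = (a : ℚ) / (d : ℚ) ^ m}

/-- The radical of an integer: the product of its distinct positive prime divisors. -/
def rad (N : ℤ) : ℕ := ∏ p ∈ N.natAbs.primeFactors, p

section Infra
variable {n : ℕ}

/-- cast an integer vector to a rational vector -/
def intVec {n : ℕ} (x : Fin n → ℤ) : Fin n → ℚ := fun i => (x i : ℚ)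

lemma map_mulVec' {S : Type*} [CommRing S] (f : ℤ →+* S) (M : Matrix (Fin n) (Fin n) ℤ)
    (x : Fin n → ℤ) : (M.map f) *ᵥ (fun i => f (x i)) = fun i => f ((M *ᵥ x) i) := by
  funext i
  simp [Matrix.mulVec, dotProduct, map_sum]

lemma castVec_mulVec {S : Type*} [CommRing S] (M : Matrix (Fin n) (Fin n) ℤ) (x : Fin n → ℤ) :
    (M.map (Int.cast : ℤ → S)) *ᵥ (fun i => ((x i : S))) = fun i => (((M *ᵥ x) i : S)) :=
  map_mulVec' (Int.castRingHom S) M x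

lemma Qmat_mulVec (M : Matrix (Fin n) (Fin n) ℤ) (x : Fin n → ℤ) :
    Qmat M *ᵥ intVec x = intVec (M *ᵥ x) :=
  map_mulVec' (Int.castRingHom ℚ) M x

lemma Qmat_pow (M : Matrix (Fin n) (Fin n) ℤ) (m : ℕ) : (Qmat M) ^ m = Qmat (M ^ m) := by
  show ((Int.castRingHom ℚ).mapMatrix M) ^ m = (Int.castRingHom ℚ).mapMatrix (M ^ m)
  rw [map_pow]

lemma intVec_injective : Function.Injective (intVec (n := n)) := by
  intro x y h
  funext i
  have : ((x i : ℚ)) = (y i : ℚ) := congrFun h i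
  exact_mod_cast this

lemma mem_GA {M : Matrix (Fin n) (Fin n) ℤ} (w : Fin n → ℚ) :
    w ∈ GA M ↔ ∃ (x : Fin n → ℤ) (k : ℤ), w = (Qmat M ^ k) *ᵥ intVec x := Iff.rfl

lemma isUnit_Qmat_det {M : Matrix (Fin n) (Fin n) ℤ} (hM : M.det ≠ 0) :
    IsUnit (Qmat M).det := by
  rw [show (Qmat M).det = ((M.det : ℚ)) from (RingHom.map_det (Int.castRingHom ℚ) M).symm ▸ rfl]
  · exact isUnit_iff_ne_zero.2 (by exact_mod_cast hM)

lemma mem_GA_iff {M : Matrix (Fin n) (Fin n) ℤ} (hM : M.det ≠ 0) (w : Fin n → ℚ) :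
    w ∈ GA M ↔ ∃ (m : ℕ) (y : Fin n → ℤ), (Qmat M) ^ m *ᵥ w = intVec y := by
  have hu : IsUnit (Qmat M).det := isUnit_Qmat_det hM
  rw [mem_GA]
  constructor
  · rintro ⟨x, k, rfl⟩
    have hle : (((-k).toNat : ℤ)) + k ≥ 0 := by
      have := Int.self_le_toNat (-k); omega
    have h1 : (((-k).toNat : ℤ)) + k = ((((-k).toNat : ℤ) + k).toNat : ℤ) :=
      (Int.toNat_of_nonneg hle).symm
    refine ⟨(-k).toNat, (M ^ (((-k).toNat : ℤ) + k).toNat) *ᵥ x, ?_⟩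
    rw [mulVec_mulVec, ← zpow_natCast (Qmat M) (-k).toNat, ← Matrix.zpow_add hu, h1,
      zpow_natCast, Qmat_pow, Qmat_mulVec]
    congr 2
  · rintro ⟨m, y, h⟩
    refine ⟨y, -(m : ℤ), ?_⟩
    rw [← h, mulVec_mulVec, ← zpow_natCast (Qmat M) m, ← Matrix.zpow_add hu,
      neg_add_cancel, zpow_zero, one_mulVec]


lemma bump {M : Matrix (Fin n) (Fin n) ℤ} {w : Fin n → ℚ} {m m' : ℕ} {y : Fin n → ℤ}
    (h : (Qmat M) ^ m *ᵥ w = intVec y) (hm : m ≤ m') :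
    (Qmat M) ^ m' *ᵥ w = intVec ((M ^ (m' - m)) *ᵥ y) := by
  conv_lhs => rw [← Nat.sub_add_cancel hm]
  rw [pow_add, ← mulVec_mulVec, h, Qmat_pow, Qmat_mulVec]

/-- `GA M` as an `AddSubgroup`, assuming `M.det ≠ 0`. -/
def GAsub (M : Matrix (Fin n) (Fin n) ℤ) (hM : M.det ≠ 0) : AddSubgroup (Fin n → ℚ) where
  carrier := GA M
  zero_mem' := by
    rw [mem_GA_iff hM]
    exact ⟨0, 0, by funext i; simp [intVec]⟩
  add_mem' := by
    intro a b ha hb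
    rw [mem_GA_iff hM] at ha hb ⊢
    obtain ⟨m1, y1, h1⟩ := ha
    obtain ⟨m2, y2, h2⟩ := hb
    refine ⟨max m1 m2, (M ^ (max m1 m2 - m1)) *ᵥ y1 + (M ^ (max m1 m2 - m2)) *ᵥ y2, ?_⟩
    rw [mulVec_add, bump h1 (le_max_left _ _), bump h2 (le_max_right _ _)]
    funext i; simp [intVec]
  neg_mem' := by
    intro a ha
    rw [mem_GA_iff hM] at ha ⊢
    obtain ⟨m, y, h⟩ := ha
    refine ⟨m, -y, ?_⟩
    rw [mulVec_neg, h]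
    funext i; simp [intVec]

lemma GAgrp_coe {M : Matrix (Fin n) (Fin n) ℤ} (hM : M.det ≠ 0) :
    (GAgrp M : Set (Fin n → ℚ)) = GA M := by
  have : GA M = ((GAsub M hM : AddSubgroup (Fin n → ℚ)) : Set (Fin n → ℚ)) := rfl
  rw [GAgrp, this, AddSubgroup.closure_eq]

lemma mem_GAgrp_iff {M : Matrix (Fin n) (Fin n) ℤ} (hM : M.det ≠ 0) {w : Fin n → ℚ} :
    w ∈ GAgrp M ↔ w ∈ GA M := by
  constructor
  · intro h
    have : w ∈ (GAgrp M : Set (Fin n → ℚ)) := h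
    rwa [GAgrp_coe hM] at this
  · intro h
    show w ∈ (GAgrp M : Set (Fin n → ℚ))
    rwa [GAgrp_coe hM]

lemma intVec_mem_GA {M : Matrix (Fin n) (Fin n) ℤ} (hM : M.det ≠ 0) (x : Fin n → ℤ) :
    intVec x ∈ GA M := by
  rw [mem_GA_iff hM]
  exact ⟨0, x, by rw [pow_zero, one_mulVec]⟩


lemma pow_dim_eq_smul {M : Matrix (Fin n) (Fin n) ℤ} {N : ℤ}
    (h : ∀ i, i < n → N ∣ M.charpoly.coeff i) :
    ∃ M' : Matrix (Fin n) (Fin n) ℤ, M ^ n = N • M' := by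
  classical
  have hdeg : M.charpoly.natDegree = n := by
    simpa using M.charpoly_natDegree_eq_dim
  have hc : M.charpoly.coeff n = 1 := by
    have hm := M.charpoly_monic
    have := hm.coeff_natDegree
    rwa [hdeg] at this
  have h0 := M.aeval_self_charpoly
  rw [aeval_eq_sum_range, hdeg, Finset.sum_range_succ, hc, one_smul] at h0
  have hMn : M ^ n = -∑ i ∈ Finset.range n, M.charpoly.coeff i • M ^ i := by
    rw [eq_neg_iff_add_eq_zero, add_comm]
    exact h0
  refine ⟨-∑ i ∈ Finset.range n, (M.charpoly.coeff i / N) • M ^ i, ?_⟩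
  rw [hMn, smul_neg, neg_inj, Finset.smul_sum]
  refine Finset.sum_congr rfl fun i hi => ?_
  rw [smul_smul, Int.mul_ediv_cancel' (h i (Finset.mem_range.1 hi))]

lemma charpoly_map_of_nilpotent {p : ℕ} (hp : p.Prime) {M : Matrix (Fin n) (Fin n) ℤ}
    {m : ℕ} (h : ∀ i j, (p : ℤ) ∣ (M ^ m) i j) :
    M.charpoly.map (Int.castRingHom (ZMod p)) = X ^ n := by
  haveI := Fact.mk hp
  set Mp := M.map (Int.cast : ℤ → ZMod p) with hMpdef
  have hpow : Mp ^ m = 0 := by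
    have : Mp ^ m = (M ^ m).map (Int.cast : ℤ → ZMod p) := by
      show ((Int.castRingHom (ZMod p)).mapMatrix M) ^ m = (Int.castRingHom (ZMod p)).mapMatrix (M ^ m)
      rw [map_pow]
    rw [this]
    ext i j
    simp only [Matrix.map_apply, Matrix.zero_apply]
    exact (ZMod.intCast_zmod_eq_zero_iff_dvd _ _).2 (h i j)
  have hnil : IsNilpotent Mp := ⟨m, hpow⟩
  have h2 := Matrix.isNilpotent_charpoly_sub_pow_of_isNilpotent hnil
  have h3 : Mp.charpoly - X ^ (Fintype.card (Fin n)) = 0 := h2.eq_zero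
  have h4 : Mp.charpoly = X ^ n := by
    rw [sub_eq_zero] at h3
    simpa using h3
  rw [← h4, hMpdef]
  exact (Matrix.charpoly_map M (Int.castRingHom (ZMod p))).symm

lemma coeff_dvd_of_charpoly_map {p : ℕ} {M : Matrix (Fin n) (Fin n) ℤ}
    (h : M.charpoly.map (Int.castRingHom (ZMod p)) = X ^ n) {i : ℕ} (hi : i < n) :
    (p : ℤ) ∣ M.charpoly.coeff i := by
  have := congrArg (fun q => Polynomial.coeff q i) h
  simp only [Polynomial.coeff_map, Polynomial.coeff_X_pow] at this
  rw [if_neg (Nat.ne_of_lt hi)] at this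
  rw [← ZMod.intCast_zmod_eq_zero_iff_dvd]
  simpa using this

lemma dvd_det_of_charpoly_map (hn : 1 ≤ n) {p : ℕ} {M : Matrix (Fin n) (Fin n) ℤ}
    (h : M.charpoly.map (Int.castRingHom (ZMod p)) = X ^ n) :
    (p : ℤ) ∣ M.det := by
  have h0 : (p : ℤ) ∣ M.charpoly.coeff 0 := coeff_dvd_of_charpoly_map h hn
  rw [Matrix.det_eq_sign_charpoly_coeff]
  exact Dvd.dvd.mul_left h0 _


lemma nsmul_eq_qsmul (p : ℕ) (v : Fin n → ℚ) : p • v = (p : ℚ) • v := by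
  funext i; simp

lemma zsmul_eq_qsmul (c : ℤ) (v : Fin n → ℚ) : c • v = (c : ℚ) • v := by
  funext i; simp

lemma intVec_nsmul (p : ℕ) (z : Fin n → ℤ) : intVec (p • z) = p • intVec z := by
  funext i; simp [intVec]

lemma intVec_zsmul (c : ℤ) (z : Fin n → ℤ) : intVec (c • z) = c • intVec z := by
  funext i; simp [intVec]

lemma intVec_sum {ι : Type*} (s : Finset ι) (f : ι → (Fin n → ℤ)) :
    intVec (∑ i ∈ s, f i) = ∑ i ∈ s, intVec (f i) := by
  funext j
  simp [intVec]

/-- `p`-divisibility, an isomorphism-invariant property of abelian groups. -/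
def DivP (G : Type*) [AddCommGroup G] (p : ℕ) : Prop := ∀ g : G, ∃ h : G, p • h = g

/-- Existence of `n` elements independent modulo `p`; isomorphism-invariant. -/
def IndP (n : ℕ) (G : Type*) [AddCommGroup G] (p : ℕ) : Prop :=
  ∃ x : Fin n → G, ∀ c : Fin n → ℤ,
    (∃ h : G, ∑ i, c i • x i = (p : ℤ) • h) → ∀ i, (p : ℤ) ∣ c i

lemma DivP.transfer {G H : Type*} [AddCommGroup G] [AddCommGroup H] (e : G ≃+ H) {p : ℕ}
    (h : DivP G p) : DivP H p := by
  intro g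
  obtain ⟨h', hh⟩ := h (e.symm g)
  exact ⟨e h', by rw [← map_nsmul, hh, e.apply_symm_apply]⟩

lemma IndP.transfer {G H : Type*} [AddCommGroup G] [AddCommGroup H] (e : G ≃+ H) {p n : ℕ}
    (h : IndP n G p) : IndP n H p := by
  obtain ⟨x, hx⟩ := h
  refine ⟨fun i => e (x i), fun c ⟨g, hg⟩ => hx c ⟨e.symm g, ?_⟩⟩
  apply e.injective
  rw [map_sum, map_zsmul, e.apply_symm_apply, ← hg]
  simp [map_zsmul]


lemma divP_GAgrp_of_charpoly {M : Matrix (Fin n) (Fin n) ℤ} (hM : M.det ≠ 0) {p : ℕ}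
    (hp : p.Prime) (hch : M.charpoly.map (Int.castRingHom (ZMod p)) = X ^ n) :
    DivP (GAgrp M) p := by
  obtain ⟨M', hM'⟩ := pow_dim_eq_smul (N := (p : ℤ))
    (fun i hi => coeff_dvd_of_charpoly_map hch hi)
  rintro ⟨w, hw⟩
  rw [mem_GAgrp_iff hM, mem_GA_iff hM] at hw
  obtain ⟨m, y, hy⟩ := hw
  have hp0 : ((p : ℚ)) ≠ 0 := by exact_mod_cast hp.ne_zero
  have hmem : (p : ℚ)⁻¹ • w ∈ GA M := by
    rw [mem_GA_iff hM]
    refine ⟨m + n, M' *ᵥ y, ?_⟩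
    have hb := bump hy (Nat.le_add_right m n)
    rw [Nat.add_sub_cancel_left] at hb
    rw [mulVec_smul, hb, hM', Matrix.smul_mulVec, intVec_zsmul, zsmul_eq_qsmul,
      smul_smul]
    norm_num [hp0]
  refine ⟨⟨(p : ℚ)⁻¹ • w, (mem_GAgrp_iff hM).2 hmem⟩, ?_⟩
  apply Subtype.ext
  rw [AddSubmonoidClass.coe_nsmul]
  show (p : ℕ) • ((p : ℚ)⁻¹ • w) = w
  rw [nsmul_eq_qsmul, smul_smul]
  norm_num [hp0]

lemma charpoly_of_divP_GAgrp {M : Matrix (Fin n) (Fin n) ℤ} (hM : M.det ≠ 0) {p : ℕ}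
    (hp : p.Prime) (hdiv : DivP (GAgrp M) p) :
    M.charpoly.map (Int.castRingHom (ZMod p)) = X ^ n := by
  classical
  -- for each basis vector, get a preimage under multiplication by p
  have key : ∀ i : Fin n, ∃ (m : ℕ) (z : Fin n → ℤ),
      M ^ m *ᵥ Pi.single i 1 = (p : ℤ) • z := by
    intro i
    have hei : intVec (Pi.single i 1) ∈ GAgrp M :=
      (mem_GAgrp_iff hM).2 (intVec_mem_GA hM _)
    obtain ⟨⟨h, hhmem⟩, hh⟩ := hdiv ⟨intVec (Pi.single i 1), hei⟩
    have hcoe : (p : ℕ) • h = intVec (Pi.single i 1) := congrArg Subtype.val hh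
    rw [mem_GAgrp_iff hM, mem_GA_iff hM] at hhmem
    obtain ⟨m, y, hy⟩ := hhmem
    refine ⟨m, y, ?_⟩
    have h1 : (Qmat M) ^ m *ᵥ intVec (Pi.single i 1) = (p : ℕ) • intVec y := by
      rw [← hcoe, mulVec_smul, hy]
    rw [Qmat_pow, Qmat_mulVec, ← intVec_nsmul] at h1
    rw [intVec_injective h1, natCast_zsmul]
  choose m z hz using key
  set mm := Finset.univ.sup m with hmm
  have key2 : ∀ i j : Fin n, (p : ℤ) ∣ (M ^ mm) j i := by
    intro i j
    have hle : m i ≤ mm := Finset.le_sup (Finset.mem_univ i)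
    have hcol : M ^ mm *ᵥ Pi.single i 1 = (p : ℤ) • (M ^ (mm - m i) *ᵥ z i) := by
      calc M ^ mm *ᵥ Pi.single i 1
          = M ^ (mm - m i) *ᵥ (M ^ (m i) *ᵥ Pi.single i 1) := by
            rw [mulVec_mulVec, ← pow_add, Nat.sub_add_cancel hle]
        _ = (p : ℤ) • (M ^ (mm - m i) *ᵥ z i) := by rw [hz i, mulVec_smul]
    have h2 := congrFun hcol j
    simp only [mulVec_single_one] at h2
    change (M ^ mm) j i = _ at h2
    rw [h2]
    exact Dvd.intro _ rfl
  exact charpoly_map_of_nilpotent hp (fun i j => key2 j i)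


lemma sum_single_intVec (c : Fin n → ℤ) :
    ∑ i, c i • intVec (Pi.single i 1) = intVec c := by
  classical
  funext j
  simp only [Finset.sum_apply, Pi.smul_apply, intVec, smul_eq_mul]
  rw [Finset.sum_eq_single j]
  · simp
  · intro b _ hb
    simp [Pi.single_apply, Ne.symm hb]
  · intro hj; exact absurd (Finset.mem_univ j) hj

lemma indP_GAgrp_of_not_dvd {M : Matrix (Fin n) (Fin n) ℤ} (hM : M.det ≠ 0) {p : ℕ}
    (hp : p.Prime) (hnd : ¬ (p : ℤ) ∣ M.det) : IndP n (GAgrp M) p := by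
  haveI := Fact.mk hp
  classical
  refine ⟨fun i => ⟨intVec (Pi.single i 1), (mem_GAgrp_iff hM).2 (intVec_mem_GA hM _)⟩, ?_⟩
  rintro c ⟨⟨h, hhmem⟩, hsum⟩
  have hsum' : intVec c = (p : ℤ) • h := by
    have h1 := congrArg Subtype.val hsum
    simp only [AddSubmonoidClass.coe_finset_sum, AddSubgroupClass.coe_zsmul] at h1
    rw [← sum_single_intVec c]
    exact h1
  rw [mem_GAgrp_iff hM, mem_GA_iff hM] at hhmem
  obtain ⟨m, y, hy⟩ := hhmem
  have hint : M ^ m *ᵥ c = (p : ℤ) • y := by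
    apply intVec_injective
    rw [← Qmat_mulVec, ← Qmat_pow, hsum', mulVec_smul, hy, intVec_zsmul]
  have hint2 : M ^ (m + 1) *ᵥ c = (p : ℤ) • (M *ᵥ y) := by
    rw [pow_succ', ← mulVec_mulVec, hint, mulVec_smul]
  set Mp := M.map (Int.cast : ℤ → ZMod p) with hMp
  have hdet : Mp.det ≠ 0 := by
    have hdd : Mp.det = ((M.det : ZMod p)) := (RingHom.map_det (Int.castRingHom (ZMod p)) M).symm
    rw [hdd, Ne, ZMod.intCast_zmod_eq_zero_iff_dvd]
    exact hnd
  have hpowmap : ∀ k : ℕ, Mp ^ k = (M ^ k).map (Int.cast : ℤ → ZMod p) := by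
    intro k
    show ((Int.castRingHom (ZMod p)).mapMatrix M) ^ k
        = (Int.castRingHom (ZMod p)).mapMatrix (M ^ k)
    rw [map_pow]
  have hvec : (Mp ^ (m + 1)) *ᵥ (fun i => ((c i : ZMod p))) = 0 := by
    rw [hpowmap, castVec_mulVec]
    funext j
    have := congrFun hint2 j
    simp only [Pi.smul_apply, smul_eq_mul] at this
    simp [this, ZMod.natCast_self]
  have hc0 : (fun i => ((c i : ZMod p))) = 0 := by
    by_contra hne
    have hd0 : (Mp ^ (m + 1)).det = 0 :=
      (Matrix.exists_mulVec_eq_zero_iff).1 ⟨_, hne, hvec⟩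
    rw [Matrix.det_pow] at hd0
    exact hdet (pow_eq_zero_iff (Nat.succ_ne_zero m) |>.1 hd0)
  intro i
  rw [← ZMod.intCast_zmod_eq_zero_iff_dvd]
  exact congrFun hc0 i


lemma mulVec_sum_zsmul {R : Type*} [CommRing R] (N : Matrix (Fin n) (Fin n) R)
    (c : Fin n → ℤ) (v : Fin n → Fin n → R) :
    N *ᵥ (∑ i, c i • v i) = ∑ i, c i • (N *ᵥ v i) := by
  funext j
  simp only [mulVec, dotProduct, Finset.sum_apply, Pi.smul_apply]
  simp only [zsmul_eq_mul, Finset.mul_sum]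
  rw [Finset.sum_comm]
  exact Finset.sum_congr rfl fun i _ => Finset.sum_congr rfl fun k _ => by ring

lemma not_indP_GAgrp_of_dvd {M : Matrix (Fin n) (Fin n) ℤ} (hM : M.det ≠ 0) {p : ℕ}
    (hp : p.Prime) (hd : (p : ℤ) ∣ M.det) : ¬ IndP n (GAgrp M) p := by
  haveI := Fact.mk hp
  classical
  rintro ⟨x, hx⟩
  have hp0 : ((p : ℚ)) ≠ 0 := by exact_mod_cast hp.ne_zero
  have hmem : ∀ i, ((x i : Fin n → ℚ)) ∈ GA M := fun i => (mem_GAgrp_iff hM).1 (x i).2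
  choose mi zi hzi using fun i => (mem_GA_iff hM _).1 (hmem i)
  set mm := Finset.univ.sup mi with hmm
  set z : Fin n → Fin n → ℤ := fun i => M ^ (mm - mi i) *ᵥ zi i with hzdef
  have hz : ∀ i, (Qmat M) ^ mm *ᵥ (x i : Fin n → ℚ) = intVec (z i) :=
    fun i => bump (hzi i) (Finset.le_sup (Finset.mem_univ i))
  set Mp := M.map (Int.cast : ℤ → ZMod p) with hMpdef
  set Y : Matrix (Fin n) (Fin n) (ZMod p) := Matrix.of (fun j i => ((z i j : ZMod p))) with hY
  have hdet : (Mp * Y).det = 0 := by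
    have hdd : Mp.det = ((M.det : ZMod p)) :=
      (RingHom.map_det (Int.castRingHom (ZMod p)) M).symm
    rw [Matrix.det_mul, hdd, (ZMod.intCast_zmod_eq_zero_iff_dvd _ _).2 hd, zero_mul]
  obtain ⟨c, hc0, hcv⟩ := (Matrix.exists_mulVec_eq_zero_iff).2 hdet
  set c' : Fin n → ℤ := fun i => ((c i).val : ℤ) with hc'def
  have hcast : ∀ i, ((c' i : ZMod p)) = c i := by
    intro i
    have h1 : (((c i).val : ℕ) : ZMod p) = c i := ZMod.natCast_rightInverse (c i)
    simp only [hc'def, Int.cast_natCast]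
    exact h1
  set u := M *ᵥ (∑ i, c' i • z i) with hudef
  have hs : (fun j' => (((∑ i, c' i • z i) j' : ZMod p))) = Y *ᵥ c := by
    funext j'
    simp only [Finset.sum_apply, Pi.smul_apply]
    simp only [zsmul_eq_mul, Int.cast_sum, Int.cast_mul]
    simp only [mulVec, dotProduct, hY, Matrix.of_apply]
    refine Finset.sum_congr rfl fun i _ => ?_
    rw [mul_comm]
    congr 1
    exact hcast i
  have hdvd : ∀ j, (p : ℤ) ∣ u j := by
    have hstep : (fun j => ((u j : ZMod p)))
        = Mp *ᵥ (fun j' => (((∑ i, c' i • z i) j' : ZMod p))) := by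
      rw [hudef]
      exact (castVec_mulVec M _).symm
    have hall : (fun j => ((u j : ZMod p))) = 0 := by
      rw [hstep, hs, Matrix.mulVec_mulVec, hcv]
    intro j
    rw [← ZMod.intCast_zmod_eq_zero_iff_dvd]
    exact congrFun hall j
  choose v hv using hdvd
  have huv : u = (p : ℤ) • v := by
    funext j
    simp only [Pi.smul_apply, smul_eq_mul]
    exact hv j
  set w := ∑ i, c' i • ((x i : Fin n → ℚ)) with hwdef
  have hwQ : (Qmat M) ^ (mm + 1) *ᵥ w = intVec u := by
    have h1 : (Qmat M) ^ (mm + 1) *ᵥ w = ∑ i, c' i • ((Qmat M) ^ (mm + 1) *ᵥ (x i : Fin n → ℚ)) := by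
      rw [hwdef, mulVec_sum_zsmul]
    have h2 : ∀ i, (Qmat M) ^ (mm + 1) *ᵥ (x i : Fin n → ℚ) = intVec (M *ᵥ z i) := by
      intro i
      have := bump (hz i) (Nat.le_succ mm)
      rwa [show mm + 1 - mm = 1 by omega, pow_one] at this
    rw [h1]
    simp only [h2]
    rw [hudef, mulVec_sum_zsmul, intVec_sum]
    exact Finset.sum_congr rfl fun i _ => by rw [intVec_zsmul]
  have hmemh : (p : ℚ)⁻¹ • w ∈ GAgrp M := by
    rw [mem_GAgrp_iff hM, mem_GA_iff hM]
    refine ⟨mm + 1, v, ?_⟩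
    rw [mulVec_smul, hwQ, huv, intVec_zsmul, zsmul_eq_qsmul, smul_smul]
    norm_num [hp0]
  have happ := hx c' ⟨⟨(p : ℚ)⁻¹ • w, hmemh⟩, ?_⟩
  · obtain ⟨i, hci⟩ : ∃ i, c i ≠ 0 := by
      by_contra hall
      push_neg at hall
      exact hc0 (funext hall)
    have hdvd' := happ i
    have : ((c' i : ZMod p)) = 0 := (ZMod.intCast_zmod_eq_zero_iff_dvd _ _).2 hdvd'
    rw [hcast i] at this
    exact hci this
  · apply Subtype.ext
    simp only [AddSubmonoidClass.coe_finset_sum, AddSubgroupClass.coe_zsmul]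
    show ∑ i, c' i • ((x i : Fin n → ℚ)) = (p : ℤ) • ((p : ℚ)⁻¹ • w)
    rw [zsmul_eq_qsmul, smul_smul, show (((p : ℤ) : ℚ)) * (p : ℚ)⁻¹ = 1 by
      push_cast
      exact mul_inv_cancel₀ hp0, one_smul]


lemma nat_dvd_pow_self (b : ℕ) : ∀ a : ℕ, a ≠ 0 → (∀ p, p.Prime → p ∣ a → p ∣ b) → a ∣ b ^ a := by
  intro a
  induction a using Nat.strong_induction_on with
  | _ a ih =>
    intro ha h
    rcases eq_or_ne a 1 with rfl | ha1
    · exact one_dvd _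
    · have hq : a.minFac.Prime := Nat.minFac_prime ha1
      obtain ⟨a', ha'⟩ := a.minFac_dvd
      have ha'0 : a' ≠ 0 := by rintro rfl; simp at ha' ; exact ha ha'
      have h2 : 2 ≤ a.minFac := hq.two_le
      have hlt : a' < a := by
        rw [ha']
        nlinarith [Nat.pos_of_ne_zero ha'0]
      have IH : a' ∣ b ^ a' := ih a' hlt ha'0
        (fun p hp hpd => h p hp (ha' ▸ Dvd.dvd.mul_left hpd _))
      have hqb : a.minFac ∣ b := h _ hq a.minFac_dvd
      have step : a ∣ b ^ (a' + 1) := by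
        rw [ha', pow_succ']
        exact mul_dvd_mul hqb IH
      have hle : a' + 1 ≤ a := by
        rw [ha']; nlinarith [Nat.pos_of_ne_zero ha'0]
      exact step.trans (pow_dvd_pow b hle)

lemma intCast_dvd_iff_natAbs {p : ℕ} {N : ℤ} : (p : ℤ) ∣ N ↔ p ∣ N.natAbs := by
  rw [← Int.natAbs_dvd_natAbs, Int.natAbs_natCast]

lemma rad_ne_zero {N : ℤ} : rad N ≠ 0 := by
  rw [rad]
  exact Finset.prod_ne_zero_iff.2 fun p hp => (Nat.prime_of_mem_primeFactors hp).ne_zero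

lemma prime_dvd_rad_iff {N : ℤ} (hN : N ≠ 0) {p : ℕ} (hp : p.Prime) :
    p ∣ rad N ↔ (p : ℤ) ∣ N := by
  rw [rad]
  constructor
  · intro h
    have := (Nat.Prime.prime hp).dvd_finset_prod_iff id |>.1 h
    obtain ⟨q, hq, hpq⟩ := this
    have hqp : p = q := ((Nat.prime_of_mem_primeFactors hq).eq_one_or_self_of_dvd p hpq).resolve_left hp.ne_one
    subst hqp
    exact intCast_dvd_iff_natAbs.2 (Nat.dvd_of_mem_primeFactors hq)
  · intro h
    apply Finset.dvd_prod_of_mem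
    rw [Nat.mem_primeFactors]
    exact ⟨hp, intCast_dvd_iff_natAbs.1 h, Int.natAbs_ne_zero.2 hN⟩

lemma int_dvd_rad_pow {N : ℤ} (hN : N ≠ 0) : ∃ t : ℕ, N ∣ (rad N : ℤ) ^ t := by
  refine ⟨N.natAbs, ?_⟩
  have h1 : N.natAbs ∣ rad N ^ N.natAbs := by
    apply nat_dvd_pow_self
    · exact Int.natAbs_ne_zero.2 hN
    · intro p hp hpd
      rw [prime_dvd_rad_iff hN hp]
      exact intCast_dvd_iff_natAbs.2 hpd
  refine (Int.dvd_natAbs.2 dvd_rfl).trans ?_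
  have h2 := Int.natCast_dvd_natCast.2 h1
  rwa [Nat.cast_pow] at h2

lemma Zinv_subset_Zinv {d e : ℤ} (hd : d ≠ 0) (he : e ≠ 0) (h : ∃ t : ℕ, d ∣ e ^ t) :
    Zinv d ⊆ Zinv e := by
  obtain ⟨t, c0, hc0⟩ := h
  rintro q ⟨a, m, rfl⟩
  refine ⟨a * c0 ^ m, t * m, ?_⟩
  have hdq : ((d : ℚ)) ≠ 0 := by exact_mod_cast hd
  have heq : ((e : ℚ)) ≠ 0 := by exact_mod_cast he
  rw [div_eq_div_iff (pow_ne_zero m hdq) (pow_ne_zero (t*m) heq)]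
  have hkey : (e : ℚ) ^ (t * m) = (d : ℚ) ^ m * (c0 : ℚ) ^ m := by
    rw [pow_mul, ← mul_pow]
    congr 1
    exact_mod_cast congrArg (fun z : ℤ => ((z : ℚ))) hc0
  rw [hkey]
  push_cast
  ring


lemma Qmat_zsmul (c : ℤ) (N : Matrix (Fin n) (Fin n) ℤ) :
    Qmat (c • N) = ((c : ℚ)) • Qmat N := by
  ext i j
  simp only [Qmat, Matrix.map_apply, Matrix.smul_apply, smul_eq_mul]
  push_cast
  ring

lemma Qmat_mul (X Y : Matrix (Fin n) (Fin n) ℤ) : Qmat (X * Y) = Qmat X * Qmat Y := by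
  show (Int.castRingHom ℚ).mapMatrix (X * Y)
      = (Int.castRingHom ℚ).mapMatrix X * (Int.castRingHom ℚ).mapMatrix Y
  rw [_root_.map_mul]

lemma Qmat_one : Qmat (1 : Matrix (Fin n) (Fin n) ℤ) = 1 := by
  show (Int.castRingHom ℚ).mapMatrix (1 : Matrix (Fin n) (Fin n) ℤ) = 1
  rw [_root_.map_one]

lemma GA_subset_Zinv {M : Matrix (Fin n) (Fin n) ℤ} (hM : M.det ≠ 0) :
    ∀ w ∈ GA M, ∀ i, w i ∈ Zinv M.det := by
  intro w hw i
  rw [mem_GA_iff hM] at hw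
  obtain ⟨m, y, hy⟩ := hw
  have h0 : (M ^ m).adjugate * M ^ m = (M ^ m).det • 1 := adjugate_mul _
  have h1 : Qmat ((M ^ m).adjugate) * (Qmat M) ^ m = (((M ^ m).det : ℚ)) • 1 := by
    rw [Qmat_pow, ← Qmat_mul, h0, Qmat_zsmul, Qmat_one]
  have h2 : (((M ^ m).det : ℚ)) • w = intVec ((M ^ m).adjugate *ᵥ y) := by
    have h3 := congrArg (fun X => X *ᵥ w) h1
    rw [← Matrix.mulVec_mulVec, hy, Qmat_mulVec, Matrix.smul_mulVec, Matrix.one_mulVec]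
      at h3
    exact h3.symm
  have hdm : ((M.det : ℚ)) ^ m ≠ 0 := pow_ne_zero _ (by exact_mod_cast hM)
  refine ⟨((M ^ m).adjugate *ᵥ y) i, m, ?_⟩
  have h4 := congrFun h2 i
  simp only [Pi.smul_apply, smul_eq_mul, intVec] at h4
  rw [Matrix.det_pow] at h4
  rw [eq_div_iff hdm]
  rw [← h4]
  push_cast
  ring

lemma exists_pow_eq_rad_smul {M : Matrix (Fin n) (Fin n) ℤ} (hM : M.det ≠ 0)
    (hch : ∀ p : ℕ, p.Prime → (p : ℤ) ∣ M.det →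
      M.charpoly.map (Int.castRingHom (ZMod p)) = X ^ n) :
    ∃ M', M ^ n = ((rad M.det : ℕ) : ℤ) • M' := by
  apply pow_dim_eq_smul
  intro i hi
  have h1 : rad M.det ∣ (M.charpoly.coeff i).natAbs := by
    rw [rad]
    apply Finset.prod_primes_dvd
    · intro p hp; exact (Nat.prime_of_mem_primeFactors hp).prime
    · intro p hp
      have hpp := Nat.prime_of_mem_primeFactors hp
      have hpd : (p : ℤ) ∣ M.det := intCast_dvd_iff_natAbs.2 (Nat.dvd_of_mem_primeFactors hp)
      exact intCast_dvd_iff_natAbs.1 (coeff_dvd_of_charpoly_map (hch p hpp hpd) hi)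
  have h2 := Int.natCast_dvd_natCast.2 h1
  exact h2.trans (Int.natAbs_dvd.2 dvd_rfl)

lemma GA_eq_Zinv {M : Matrix (Fin n) (Fin n) ℤ} (hM : M.det ≠ 0)
    (hch : ∀ p : ℕ, p.Prime → (p : ℤ) ∣ M.det →
      M.charpoly.map (Int.castRingHom (ZMod p)) = X ^ n) :
    GA M = {w : Fin n → ℚ | ∀ i, w i ∈ Zinv ((rad M.det : ℕ) : ℤ)} := by
  have hR0 : ((rad M.det : ℕ) : ℤ) ≠ 0 := by exact_mod_cast (rad_ne_zero (N := M.det))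
  have hRq : (((rad M.det : ℕ) : ℤ) : ℚ) ≠ 0 := by exact_mod_cast hR0
  apply Set.eq_of_subset_of_subset
  · intro w hw i
    exact Zinv_subset_Zinv hM hR0 (int_dvd_rad_pow hM) (GA_subset_Zinv hM w hw i)
  · intro w hw
    choose a m hma using hw
    set mx := Finset.univ.sup m with hmx
    set y : Fin n → ℤ := fun i => a i * ((rad M.det : ℕ) : ℤ) ^ (mx - m i) with hy
    have hwy : ((((rad M.det : ℕ) : ℤ) : ℚ) ^ mx) • w = intVec y := by
      funext i
      have hle : m i ≤ mx := Finset.le_sup (Finset.mem_univ i)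
      have hr : ((rad M.det : ℚ)) ≠ 0 := by
        exact_mod_cast (rad_ne_zero (N := M.det))
      simp only [Pi.smul_apply, smul_eq_mul, intVec, hy]
      rw [hma i]
      push_cast
      rw [← mul_div_assoc, div_eq_iff (pow_ne_zero _ hr)]
      conv_lhs => rw [show mx = (mx - m i) + m i by omega, pow_add]
      ring
    obtain ⟨M', hM'⟩ := exists_pow_eq_rad_smul hM hch
    rw [mem_GA_iff hM]
    refine ⟨n * mx, M' ^ mx *ᵥ y, ?_⟩
    have hpow : M ^ (n * mx) = (((rad M.det : ℕ) : ℤ)) ^ mx • M' ^ mx := by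
      rw [pow_mul, hM', _root_.smul_pow]
    rw [Qmat_pow, hpow, Qmat_zsmul, Matrix.smul_mulVec, ← Matrix.mulVec_smul]
    rw [show ((((rad M.det : ℕ) : ℤ) ^ mx : ℤ) : ℚ) • w
        = ((((rad M.det : ℕ) : ℤ) : ℚ) ^ mx) • w by push_cast; ring_nf]
    rw [hwy, Qmat_mulVec]

end Infra

theorem stmt4 (n : ℕ) (hn : 1 ≤ n) (A B : Matrix (Fin n) (Fin n) ℤ)
    (hA : A.det ≠ 0) (hB : B.det ≠ 0) (hA1 : A.det ≠ 1) (hA1' : A.det ≠ -1)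
    (hP'A : ∀ p : ℕ, p.Prime → (p : ℤ) ∣ A.det →
      A.charpoly.map (Int.castRingHom (ZMod p)) = X ^ n) :
    Nonempty (GAgrp A ≃+ GAgrp B) ↔
      ((∀ p : ℕ, p.Prime → ((p : ℤ) ∣ A.det ↔ (p : ℤ) ∣ B.det)) ∧
       (∀ p : ℕ, p.Prime → (p : ℤ) ∣ B.det →
         B.charpoly.map (Int.castRingHom (ZMod p)) = X ^ n)) := by
  constructor
  · rintro ⟨e⟩
    have hDivA : ∀ p : ℕ, p.Prime → (DivP (GAgrp A) p ↔ (p : ℤ) ∣ A.det) := by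
      intro p hp
      constructor
      · intro hdiv
        exact dvd_det_of_charpoly_map hn (charpoly_of_divP_GAgrp hA hp hdiv)
      · intro hdvd
        exact divP_GAgrp_of_charpoly hA hp (hP'A p hp hdvd)
    have hDivTrans : ∀ p : ℕ, (DivP (GAgrp A) p ↔ DivP (GAgrp B) p) := fun p =>
      ⟨fun h => h.transfer e, fun h => h.transfer e.symm⟩
    have hii : ∀ p : ℕ, p.Prime → (p : ℤ) ∣ B.det →
        B.charpoly.map (Int.castRingHom (ZMod p)) = X ^ n := by
      intro p hp hpB
      by_contra hch
      have hnotdivB : ¬ DivP (GAgrp B) p := fun hd => hch (charpoly_of_divP_GAgrp hB hp hd)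
      have hnotdivA : ¬ DivP (GAgrp A) p := fun hd => hnotdivB ((hDivTrans p).1 hd)
      have hnotdvdA : ¬ (p : ℤ) ∣ A.det := fun hd => hnotdivA ((hDivA p hp).2 hd)
      have hind := indP_GAgrp_of_not_dvd hA hp hnotdvdA
      exact not_indP_GAgrp_of_dvd hB hp hpB (hind.transfer e)
    refine ⟨?_, hii⟩
    intro p hp
    constructor
    · intro hdA
      have hdivB := (hDivTrans p).1 ((hDivA p hp).2 hdA)
      exact dvd_det_of_charpoly_map hn (charpoly_of_divP_GAgrp hB hp hdivB)
    · intro hdB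
      have hdivB := divP_GAgrp_of_charpoly hB hp (hii p hp hdB)
      exact (hDivA p hp).1 ((hDivTrans p).2 hdivB)
  · rintro ⟨hsame, hPB⟩
    have hrad : rad A.det = rad B.det := by
      unfold rad
      congr 1
      ext p
      rw [Nat.mem_primeFactors, Nat.mem_primeFactors]
      constructor
      · rintro ⟨h1, h2, h3⟩
        refine ⟨h1, ?_, Int.natAbs_ne_zero.2 hB⟩
        exact intCast_dvd_iff_natAbs.1 ((hsame p h1).1 (intCast_dvd_iff_natAbs.2 h2))
      · rintro ⟨h1, h2, h3⟩
        refine ⟨h1, ?_, Int.natAbs_ne_zero.2 hA⟩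
        exact intCast_dvd_iff_natAbs.1 ((hsame p h1).2 (intCast_dvd_iff_natAbs.2 h2))
    have hset : GA A = GA B := by
      rw [GA_eq_Zinv hA hP'A, GA_eq_Zinv hB hPB, hrad]
    have hgrp : GAgrp A = GAgrp B := by
      rw [GAgrp, GAgrp, hset]
    exact ⟨hgrp ▸ AddEquiv.refl _⟩
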